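/- arXiv:1112.4063 — 2 statements merged into one kernel-verified Lean document; each statement's English description precedes it below -/
import Mathlib

section
/- For |q| < |z₁| < |q⁻¹·z₂| with |q z₂| < |z₁| (i.e., |q z₂| < |z₁| < |q⁻¹ z₂|, |q|<1), the sum ∑_{n∈ℤ} z₁z₂qⁿ/(z₁−z₂qⁿ)² equals z₁z₂/(z₁−z₂)² + ∑_{m≥1} m z₁ᵐ z₂⁻ᵐ qᵐ/(1−qᵐ) + ∑_{m≥1} m z₁⁻ᵐ z₂ᵐ qᵐ/(1−qᵐ). -/
/-!
Put `x = z₂ / z₁` and `φ t = t / (1 - t) ^ 2`, so that the `n`-th term is `φ (x qⁿ)`. Since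
`φ t⁻¹ = φ t`, the terms with `n < 0` are `φ (x⁻¹ q^|n|)`, and both halves of the sum have the
same shape. For `n ≥ 1` expand `φ t = ∑_{m ≥ 1} m tᵐ`: the double series `∑_{n,m ≥ 1} m xᵐ q^{nm}`
converges absolutely because `|x q| < 1` and `|q| < 1`, and summing it over `n` first gives the
Lambert series `∑_{m ≥ 1} m xᵐ qᵐ / (1 - qᵐ)`.
-/

section FieldIdentities

variable {K : Type*} [Field K]

theorem inv_div_one_sub_inv_sq (t : K) : t⁻¹ / (1 - t⁻¹) ^ 2 = t / (1 - t) ^ 2 := by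
  rcases eq_or_ne t 0 with rfl | ht
  · simp
  rw [inv_eq_one_div, one_sub_div ht, div_pow, div_div_div_eq, one_mul, ← neg_sub t, neg_sq]
  field_simp

theorem mul_div_sub_sq_eq_div_one_sub_sq {z : K} (hz : z ≠ 0) (w : K) :
    z * w / (z - w) ^ 2 = w / z / (1 - w / z) ^ 2 := by
  rw [one_sub_div hz, div_pow, div_div_eq_mul_div]
  field_simp

theorem pow_succ_mul_zpow_neg_succ (a b : K) (m : ℕ) :
    a ^ (m + 1) * b ^ (-((m : ℤ) + 1)) = (a / b) ^ (m + 1) := by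
  rw [div_pow, div_eq_mul_inv, ← zpow_natCast b, ← zpow_neg]
  push_cast
  rfl

end FieldIdentities

section SeriesInField

variable {𝕜 : Type*} [NormedField 𝕜] {r : 𝕜}

theorem hasSum_pow_succ (hr : ‖r‖ < 1) : HasSum (fun n : ℕ => r ^ (n + 1)) (r / (1 - r)) := by
  simpa only [pow_succ', div_eq_mul_inv] using (hasSum_geometric_of_norm_lt_one hr).mul_left r

theorem hasSum_succ_mul_pow_succ (hr : ‖r‖ < 1) :
    HasSum (fun n : ℕ => ((n : 𝕜) + 1) * r ^ (n + 1)) (r / (1 - r) ^ 2) := by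
  simpa using (hasSum_nat_add_iff' (f := fun n : ℕ => (n : 𝕜) * r ^ n) 1).2
    (hasSum_coe_mul_geometric_of_norm_lt_one hr)

end SeriesInField

section Lambert

variable {𝕜 : Type*} [RCLike 𝕜] {q x : 𝕜}

theorem norm_mul_pow_succ (x q : 𝕜) (n : ℕ) : ‖x * q ^ (n + 1)‖ = ‖x * q‖ * ‖q‖ ^ n := by
  rw [pow_succ', ← mul_assoc, norm_mul, norm_pow]

theorem summable_succ_mul_mul_pow_succ_pow_succ (hq : ‖q‖ < 1) (hxq : ‖x * q‖ < 1) :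
    Summable (fun p : ℕ × ℕ => ((p.2 : 𝕜) + 1) * (x * q ^ (p.1 + 1)) ^ (p.2 + 1)) := by
  have hrow : Summable (fun m : ℕ => ((m : ℝ) + 1) * ‖x * q‖ ^ (m + 1)) :=
    (hasSum_succ_mul_pow_succ (by simpa using hxq)).summable
  refine Summable.of_norm_bounded ((summable_geometric_of_lt_one (norm_nonneg q) hq).mul_of_nonneg
    hrow (fun n => by positivity) (fun m => by positivity)) ?_
  rintro ⟨n, m⟩
  have hqn : ‖q‖ ^ n ≤ 1 := pow_le_one₀ (norm_nonneg q) hq.le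
  calc ‖((m : 𝕜) + 1) * (x * q ^ (n + 1)) ^ (m + 1)‖
      = ((m : ℝ) + 1) * ‖x * q‖ ^ (m + 1) * (‖q‖ ^ n) ^ (m + 1) := by
        rw [norm_mul, norm_pow, norm_mul_pow_succ, mul_pow, ← mul_assoc]
        norm_cast
    _ ≤ ((m : ℝ) + 1) * ‖x * q‖ ^ (m + 1) * ‖q‖ ^ n := by
        gcongr
        exact pow_le_of_le_one (by positivity) hqn m.succ_ne_zero
    _ = ‖q‖ ^ n * (((m : ℝ) + 1) * ‖x * q‖ ^ (m + 1)) := mul_comm _ _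

theorem hasSum_mul_pow_succ_div_one_sub_sq (hq : ‖q‖ < 1) (hxq : ‖x * q‖ < 1) :
    HasSum (fun n : ℕ => x * q ^ (n + 1) / (1 - x * q ^ (n + 1)) ^ 2)
      (∑' m : ℕ, ((m : 𝕜) + 1) * x ^ (m + 1) * q ^ (m + 1) / (1 - q ^ (m + 1))) := by
  set g : ℕ × ℕ → 𝕜 := fun p => ((p.2 : 𝕜) + 1) * (x * q ^ (p.1 + 1)) ^ (p.2 + 1)
  have hg : Summable g := summable_succ_mul_mul_pow_succ_pow_succ hq hxq
  have hrow (n : ℕ) : HasSum (fun m => g (n, m))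
      (x * q ^ (n + 1) / (1 - x * q ^ (n + 1)) ^ 2) := by
    refine hasSum_succ_mul_pow_succ (r := x * q ^ (n + 1)) ?_
    rw [norm_mul_pow_succ]
    exact (mul_le_of_le_one_right (norm_nonneg _) (pow_le_one₀ (norm_nonneg q) hq.le)).trans_lt hxq
  have hcol (m : ℕ) : HasSum (fun n => g (n, m))
      (((m : 𝕜) + 1) * x ^ (m + 1) * q ^ (m + 1) / (1 - q ^ (m + 1))) := by
    have hqm : ‖q ^ (m + 1)‖ < 1 := by
      rw [norm_pow]
      exact pow_lt_one₀ (norm_nonneg q) hq m.succ_ne_zero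
    have hterm (n : ℕ) : g (n, m) = ((m : 𝕜) + 1) * x ^ (m + 1) * (q ^ (m + 1)) ^ (n + 1) := by
      simp only [g]
      rw [mul_pow, ← pow_mul, ← pow_mul, mul_comm (n + 1), mul_assoc]
    simp only [hterm, mul_div_assoc]
    exact (hasSum_pow_succ hqm).mul_left _
  have hswap : HasSum (fun p : ℕ × ℕ => g p.swap) (∑' p, g p) :=
    ((Equiv.prodComm ℕ ℕ).hasSum_iff (f := g)).2 hg.hasSum
  rw [(hswap.prod_fiberwise hcol).tsum_eq]
  exact hg.hasSum.prod_fiberwise hrow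

theorem hasSum_int_mul_zpow_div_one_sub_sq (hq : ‖q‖ < 1) (hxq : ‖x * q‖ < 1)
    (hxq' : ‖x⁻¹ * q‖ < 1) :
    HasSum (fun n : ℤ => x * q ^ n / (1 - x * q ^ n) ^ 2)
      (x / (1 - x) ^ 2 + ∑' m : ℕ, ((m : 𝕜) + 1) * x ^ (m + 1) * q ^ (m + 1) / (1 - q ^ (m + 1))
        + ∑' m : ℕ, ((m : 𝕜) + 1) * x⁻¹ ^ (m + 1) * q ^ (m + 1) / (1 - q ^ (m + 1))) := by
  refine HasSum.of_nat_of_neg_add_one ?_ ?_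
  · simp only [zpow_natCast]
    rw [← hasSum_nat_add_iff' 1]
    simpa using hasSum_mul_pow_succ_div_one_sub_sq hq hxq
  · have hinv (n : ℕ) : x * q ^ (-((n : ℤ) + 1)) = (x⁻¹ * q ^ (n + 1))⁻¹ := by
      rw [mul_inv, inv_inv, ← zpow_natCast, ← zpow_neg]
      push_cast
      rfl
    simp only [hinv, inv_div_one_sub_inv_sq]
    exact hasSum_mul_pow_succ_div_one_sub_sq hq hxq'

end Lambert

theorem propagator_expansion_general (q z₁ z₂ : ℂ) (hq0 : 0 < ‖q‖) (hq1 : ‖q‖ < 1)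
    (h1 : ‖q * z₂‖ < ‖z₁‖) (h2 : ‖z₁‖ < ‖q⁻¹ * z₂‖) :
    ∑' n : ℤ, z₁ * z₂ * q ^ n / (z₁ - z₂ * q ^ n) ^ 2 =
      z₁ * z₂ / (z₁ - z₂) ^ 2 +
        (∑' m : ℕ, ((m : ℂ) + 1) * z₁ ^ (m + 1) * z₂ ^ (-((m : ℤ) + 1)) * q ^ (m + 1) /
          (1 - q ^ (m + 1))) +
        ∑' m : ℕ, ((m : ℂ) + 1) * z₁ ^ (-((m : ℤ) + 1)) * z₂ ^ (m + 1) * q ^ (m + 1) /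
          (1 - q ^ (m + 1)) := by
  have hz₁ : 0 < ‖z₁‖ := (norm_nonneg _).trans_lt h1
  have h2' : ‖q * z₁‖ < ‖z₂‖ := by
    rwa [norm_mul, norm_inv, inv_mul_eq_div, lt_div_iff₀ hq0, mul_comm, ← norm_mul] at h2
  have hz₂ : 0 < ‖z₂‖ := (norm_nonneg _).trans_lt h2'
  have hx : ‖z₂ / z₁ * q‖ < 1 := by
    rwa [norm_mul, norm_div, div_mul_eq_mul_div, div_lt_one hz₁, mul_comm, ← norm_mul]
  have hx' : ‖(z₂ / z₁)⁻¹ * q‖ < 1 := by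
    rwa [inv_div, norm_mul, norm_div, div_mul_eq_mul_div, div_lt_one hz₂, mul_comm, ← norm_mul]
  have hterm := mul_div_sub_sq_eq_div_one_sub_sq (norm_pos_iff.1 hz₁)
  have hL₁ : ∑' m : ℕ, ((m : ℂ) + 1) * z₁ ^ (m + 1) * z₂ ^ (-((m : ℤ) + 1)) * q ^ (m + 1) /
      (1 - q ^ (m + 1)) = ∑' m : ℕ, ((m : ℂ) + 1) * (z₂ / z₁)⁻¹ ^ (m + 1) * q ^ (m + 1) /
      (1 - q ^ (m + 1)) := by
    simp only [mul_assoc ((_ : ℂ) + 1), pow_succ_mul_zpow_neg_succ, inv_div]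
  have hL₂ : ∑' m : ℕ, ((m : ℂ) + 1) * z₁ ^ (-((m : ℤ) + 1)) * z₂ ^ (m + 1) * q ^ (m + 1) /
      (1 - q ^ (m + 1)) = ∑' m : ℕ, ((m : ℂ) + 1) * (z₂ / z₁) ^ (m + 1) * q ^ (m + 1) /
      (1 - q ^ (m + 1)) := by
    refine tsum_congr fun m => ?_
    rw [mul_assoc _ (z₁ ^ _), mul_comm (z₁ ^ _), pow_succ_mul_zpow_neg_succ]
  calc ∑' n : ℤ, z₁ * z₂ * q ^ n / (z₁ - z₂ * q ^ n) ^ 2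
      = ∑' n : ℤ, z₂ / z₁ * q ^ n / (1 - z₂ / z₁ * q ^ n) ^ 2 := by
        simp only [mul_assoc z₁, hterm, mul_div_right_comm]
    _ = _ := by
        rw [(hasSum_int_mul_zpow_div_one_sub_sq hq1 hx hx').tsum_eq, hterm, hL₁, hL₂]
        ring

/-- For `0 < |q| < 1`, `z₁ ≠ z₂qⁿ` for all `n ∈ ℤ`, and `|q z₂| < |z₁| < |q⁻¹ z₂|`:
`∑_{n∈ℤ} z₁z₂qⁿ/(z₁−z₂qⁿ)² = z₁z₂/(z₁−z₂)² + ∑_{m≥1} m z₁ᵐz₂⁻ᵐqᵐ/(1−qᵐ)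
+ ∑_{m≥1} m z₁⁻ᵐz₂ᵐqᵐ/(1−qᵐ)`. -/
theorem propagator_expansion (q z₁ z₂ : ℂ) (hq0 : 0 < ‖q‖) (hq1 : ‖q‖ < 1)
    (hne : ∀ n : ℤ, z₁ ≠ z₂ * q ^ n)
    (h1 : ‖q * z₂‖ < ‖z₁‖) (h2 : ‖z₁‖ < ‖q⁻¹ * z₂‖) :
    ∑' n : ℤ, z₁ * z₂ * q ^ n / (z₁ - z₂ * q ^ n) ^ 2 =
      z₁ * z₂ / (z₁ - z₂) ^ 2 +
        (∑' m : ℕ, ((m : ℂ) + 1) * z₁ ^ (m + 1) * z₂ ^ (-((m : ℤ) + 1)) * q ^ (m + 1) /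
          (1 - q ^ (m + 1))) +
        ∑' m : ℕ, ((m : ℂ) + 1) * z₁ ^ (-((m : ℤ) + 1)) * z₂ ^ (m + 1) * q ^ (m + 1) /
          (1 - q ^ (m + 1)) :=
  propagator_expansion_general q z₁ z₂ hq0 hq1 h1 h2
end

section
/- The formal identity ∑_{k≥0} (λᵏ/k!) (D + α)ᵏ·1 = exp(((e^{λD}−1)/D) α) holds in A[[λ]] as formal power series, where A = ℂ[α⁽⁰⁾,α⁽¹⁾,...], α = α⁽⁰⁾, and D is the derivation D(α⁽ⁿ⁾)=α⁽ⁿ⁺¹⁾. -/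
open MvPolynomial

/-- The total-derivative operator `D` on `A = ℂ[α⁽⁰⁾, α⁽¹⁾, ...]`,
with `D(α⁽ⁿ⁾) = α⁽ⁿ⁺¹⁾`. -/
noncomputable def totalDer :
    Derivation ℂ (MvPolynomial ℕ ℂ) (MvPolynomial ℕ ℂ) :=
  MvPolynomial.mkDerivation ℂ (fun n => X (n + 1))

/-- The formal series `g = (e^{λD}−1)/D` applied to `α = α⁽⁰⁾`, i.e.
`g = ∑_{j≥1} (λʲ/j!) α⁽ʲ⁻¹⁾ ∈ A[[λ]]`. -/
noncomputable def expArg : PowerSeries (MvPolynomial ℕ ℂ) :=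
  PowerSeries.mk fun j => if j = 0 then 0 else ((j.factorial : ℂ))⁻¹ • X (j - 1)

/-- Coefficientwise extension of `totalDer` to power series. -/
noncomputable def Dser (f : PowerSeries (MvPolynomial ℕ ℂ)) :
    PowerSeries (MvPolynomial ℕ ℂ) :=
  PowerSeries.mk fun k => totalDer (PowerSeries.coeff k f)

@[simp] lemma coeff_Dser (f : PowerSeries (MvPolynomial ℕ ℂ)) (k : ℕ) :
    PowerSeries.coeff k (Dser f) = totalDer (PowerSeries.coeff k f) :=
  PowerSeries.coeff_mk _ _

lemma Dser_mul (f h : PowerSeries (MvPolynomial ℕ ℂ)) :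
    Dser (f * h) = f * Dser h + Dser f * h := by
  refine PowerSeries.ext fun k => ?_
  simp only [coeff_Dser, PowerSeries.coeff_mul, map_sum, map_add]
  rw [← Finset.sum_add_distrib]
  refine Finset.sum_congr rfl fun p _ => ?_
  rw [Derivation.leibniz]
  simp only [smul_eq_mul]
  ring

lemma Dser_pow (f : PowerSeries (MvPolynomial ℕ ℂ)) (n : ℕ) :
    Dser (f ^ (n + 1)) = (n + 1) • (f ^ n * Dser f) := by
  induction n with
  | zero => simp
  | succ n ih =>
    rw [pow_succ, Dser_mul, ih, smul_mul_assoc, mul_right_comm, ← pow_succ]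
    conv_rhs => rw [succ_nsmul]
    exact add_comm _ _

lemma Dser_one : Dser (1 : PowerSeries (MvPolynomial ℕ ℂ)) = 0 := by
  refine PowerSeries.ext fun k => ?_
  simp only [coeff_Dser, PowerSeries.coeff_one, map_zero]
  split <;> simp

@[simp] lemma totalDer_X (n : ℕ) : totalDer (X n) = X (n + 1) := by
  simp [totalDer, MvPolynomial.mkDerivation_X]

lemma mul_natCast (p : MvPolynomial ℕ ℂ) (n : ℕ) :
    p * (n : MvPolynomial ℕ ℂ) = (n : ℂ) • p := by
  rw [← map_natCast (MvPolynomial.C (σ := ℕ) (R := ℂ)) n, mul_comm,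
    ← MvPolynomial.smul_eq_C_mul]

lemma inv_fact_succ (m : ℕ) :
    (((m + 1).factorial : ℂ))⁻¹ * ((m + 1 : ℕ) : ℂ) = ((m.factorial : ℂ))⁻¹ := by
  have h : ((m + 1).factorial : ℂ) = ((m + 1 : ℕ) : ℂ) * (m.factorial : ℂ) := by
    rw [Nat.factorial_succ]; push_cast; ring
  have h1 : ((m + 1 : ℕ) : ℂ) ≠ 0 := Nat.cast_ne_zero.mpr (Nat.succ_ne_zero m)
  rw [h, mul_inv, mul_comm (((m + 1 : ℕ) : ℂ))⁻¹, mul_assoc, inv_mul_cancel₀ h1, mul_one]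

lemma fact_smul_aux (m : ℕ) (x : MvPolynomial ℕ ℂ) :
    (((m + 1).factorial : ℂ))⁻¹ • ((m + 1 : ℕ) • x) = ((m.factorial : ℂ))⁻¹ • x := by
  rw [← Nat.cast_smul_eq_nsmul ℂ, smul_smul, inv_fact_succ]

lemma deriv_expArg :
    (PowerSeries.derivative (MvPolynomial ℕ ℂ)) expArg =
      PowerSeries.C (X 0) + Dser expArg := by
  refine PowerSeries.ext fun k => ?_
  rw [PowerSeries.coeff_derivative]
  simp only [map_add, coeff_Dser, expArg, PowerSeries.coeff_mk]
  cases k with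
  | zero => simp [PowerSeries.coeff_C]
  | succ j =>
    rw [PowerSeries.coeff_C, if_neg (by omega : ¬(j + 1 = 0)),
      if_neg (by omega : ¬(j + 1 + 1 = 0)), if_neg (by omega : ¬(j + 1 = 0))]
    have h1 : ((j + 1 : ℕ) : MvPolynomial ℕ ℂ) + 1 = ((j + 1 + 1 : ℕ) : MvPolynomial ℕ ℂ) := by
      push_cast; ring
    rw [Nat.add_sub_cancel, Nat.add_sub_cancel, smul_mul_assoc, h1, mul_natCast, smul_smul,
      inv_fact_succ, Derivation.map_smul, totalDer_X, zero_add]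

lemma X_dvd_expArg : (PowerSeries.X : PowerSeries (MvPolynomial ℕ ℂ)) ∣ expArg := by
  rw [PowerSeries.X_dvd_iff, ← PowerSeries.coeff_zero_eq_constantCoeff_apply]
  simp [expArg]

lemma X_dvd_Dser_expArg :
    (PowerSeries.X : PowerSeries (MvPolynomial ℕ ℂ)) ∣ Dser expArg := by
  rw [PowerSeries.X_dvd_iff, ← PowerSeries.coeff_zero_eq_constantCoeff_apply]
  simp [expArg]

lemma coeff_top_zero (k : ℕ) :
    PowerSeries.coeff (R := MvPolynomial ℕ ℂ) k (expArg ^ k * Dser expArg) = 0 := by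
  have h : (PowerSeries.X : PowerSeries (MvPolynomial ℕ ℂ)) ^ (k + 1) ∣
      expArg ^ k * Dser expArg := by
    rw [pow_succ]
    exact mul_dvd_mul (pow_dvd_pow_of_dvd X_dvd_expArg k) X_dvd_Dser_expArg
  exact PowerSeries.X_pow_dvd_iff.mp h k (Nat.lt_succ_self k)

/-- The right-hand side as a function of `k`. -/
noncomputable def rhsFun (k : ℕ) : MvPolynomial ℕ ℂ :=
  ∑ n ∈ Finset.range (k + 1),
    ((n.factorial : ℂ))⁻¹ • PowerSeries.coeff (R := MvPolynomial ℕ ℂ) k (expArg ^ n)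

lemma rhs_rec (k : ℕ) :
    ((k + 1 : ℕ) : ℂ) • rhsFun (k + 1) = X 0 * rhsFun k + totalDer (rhsFun k) := by
  have key : ∀ n : ℕ, ((k + 1 : ℕ) : ℂ) •
      (((n.factorial : ℂ))⁻¹ • PowerSeries.coeff (R := MvPolynomial ℕ ℂ) (k + 1) (expArg ^ n)) =
      ((n.factorial : ℂ))⁻¹ •
        PowerSeries.coeff (R := MvPolynomial ℕ ℂ) k
          ((PowerSeries.derivative (MvPolynomial ℕ ℂ)) (expArg ^ n)) := by
    intro n
    rw [PowerSeries.coeff_derivative]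
    have h1 : ((k : MvPolynomial ℕ ℂ) + 1) = ((k + 1 : ℕ) : MvPolynomial ℕ ℂ) := by
      push_cast; ring
    rw [h1, mul_natCast, smul_comm]
  have lhs_eq : ((k + 1 : ℕ) : ℂ) • rhsFun (k + 1) =
      ∑ m ∈ Finset.range (k + 1),
        ((m.factorial : ℂ))⁻¹ •
          PowerSeries.coeff (R := MvPolynomial ℕ ℂ) k
            (expArg ^ m * (PowerSeries.C (X 0) + Dser expArg)) := by
    rw [rhsFun, Finset.smul_sum]
    rw [Finset.sum_congr rfl fun n _ => key n]
    rw [Finset.sum_range_succ']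
    simp only [pow_zero, Derivation.map_one_eq_zero, map_zero, smul_zero, add_zero]
    refine Finset.sum_congr rfl fun m _ => ?_
    rw [Derivation.leibniz_pow, Nat.add_sub_cancel, map_nsmul, fact_smul_aux, smul_eq_mul,
      deriv_expArg]
  rw [lhs_eq]
  have split : ∀ m : ℕ,
      PowerSeries.coeff (R := MvPolynomial ℕ ℂ) k
          (expArg ^ m * (PowerSeries.C (X 0) + Dser expArg)) =
        PowerSeries.coeff (R := MvPolynomial ℕ ℂ) k (expArg ^ m) * X 0 +
          PowerSeries.coeff (R := MvPolynomial ℕ ℂ) k (expArg ^ m * Dser expArg) := by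
    intro m
    rw [mul_add, map_add, PowerSeries.coeff_mul_C]
  simp only [split, smul_add, Finset.sum_add_distrib]
  congr 1
  · -- first sum is X 0 * rhsFun k
    rw [rhsFun, Finset.mul_sum]
    refine Finset.sum_congr rfl fun m _ => ?_
    rw [mul_smul_comm, mul_comm]
  · -- second sum is totalDer (rhsFun k)
    rw [rhsFun, map_sum]
    rw [Finset.sum_range_succ, coeff_top_zero, smul_zero, add_zero]
    have rhs_eq : ∑ n ∈ Finset.range (k + 1),
        totalDer (((n.factorial : ℂ))⁻¹ •
          PowerSeries.coeff (R := MvPolynomial ℕ ℂ) k (expArg ^ n)) =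
        ∑ p ∈ Finset.range k,
          ((p.factorial : ℂ))⁻¹ •
            PowerSeries.coeff (R := MvPolynomial ℕ ℂ) k (expArg ^ p * Dser expArg) := by
      rw [Finset.sum_range_succ']
      simp only [pow_zero]
      rw [Derivation.map_smul]
      have : totalDer (PowerSeries.coeff (R := MvPolynomial ℕ ℂ) k
          ((1 : PowerSeries (MvPolynomial ℕ ℂ)))) = 0 := by
        have := congrArg (PowerSeries.coeff (R := MvPolynomial ℕ ℂ) k) Dser_one
        simpa using this
      rw [this, smul_zero, add_zero]
      refine Finset.sum_congr rfl fun p _ => ?_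
      rw [Derivation.map_smul]
      have : totalDer (PowerSeries.coeff (R := MvPolynomial ℕ ℂ) k (expArg ^ (p + 1))) =
          PowerSeries.coeff (R := MvPolynomial ℕ ℂ) k ((p + 1) •
            (expArg ^ p * Dser expArg)) := by
        have := congrArg (PowerSeries.coeff (R := MvPolynomial ℕ ℂ) k) (Dser_pow expArg p)
        simpa using this
      rw [this, map_nsmul, fact_smul_aux]
    rw [rhs_eq]

/-- The operator `D + α`. -/
noncomputable def Eop : Module.End ℂ (MvPolynomial ℕ ℂ) :=
  totalDer.toLinearMap + LinearMap.mulLeft ℂ (X 0)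

lemma lhs_rec (k : ℕ) :
    ((k + 1 : ℕ) : ℂ) • ((((k + 1).factorial : ℂ))⁻¹ • (Eop ^ (k + 1)) 1) =
      X 0 * ((k.factorial : ℂ)⁻¹ • (Eop ^ k) 1) +
        totalDer ((k.factorial : ℂ)⁻¹ • (Eop ^ k) 1) := by
  rw [pow_succ', Module.End.mul_apply]
  have hE : ∀ x : MvPolynomial ℕ ℂ, Eop x = totalDer x + X 0 * x := by
    intro x
    simp [Eop, LinearMap.add_apply, LinearMap.mulLeft_apply]
  rw [hE, smul_smul, mul_comm, inv_fact_succ, smul_add, Derivation.map_smul, mul_smul_comm, add_comm]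

/-- The formal identity `∑_{k≥0} (λᵏ/k!)(D+α)ᵏ·1 = exp((e^{λD}−1)/D · α)` in
`A[[λ]]`, stated coefficientwise in `λᵏ` (the exponential of the
constant-term-free series `g = expArg` has `k`-th coefficient
`∑_{n=0}^{k} coeff_k(gⁿ)/n!`). -/
theorem exp_D_plus_alpha (k : ℕ) :
    ((k.factorial : ℂ))⁻¹ •
        ((((totalDer.toLinearMap + LinearMap.mulLeft ℂ (X 0) :
            Module.End ℂ (MvPolynomial ℕ ℂ))) ^ k)
          (1 : MvPolynomial ℕ ℂ)) =
      ∑ n ∈ Finset.range (k + 1),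
        ((n.factorial : ℂ))⁻¹ • PowerSeries.coeff (R := MvPolynomial ℕ ℂ) k (expArg ^ n) := by
  show ((k.factorial : ℂ))⁻¹ • (Eop ^ k) 1 = rhsFun k
  induction k with
  | zero =>
    simp [rhsFun, Eop]
  | succ k ih =>
    have h1 := lhs_rec k
    have h2 := rhs_rec k
    rw [ih] at h1
    rw [← h2] at h1
    have hc : ((k + 1 : ℕ) : ℂ) ≠ 0 := Nat.cast_ne_zero.mpr (Nat.succ_ne_zero k)
    exact smul_right_injective (MvPolynomial ℕ ℂ) hc h1
end
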